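/- arXiv:2509.14541 — 3 statements merged into one kernel-verified Lean document; each statement's English description precedes it below -/
import Mathlib

section
/- Let d ≥ 1, let L : ℝ^d × ℝ^d → ℝ be C², ℤ^d-periodic in its first variable and superlinear, and let F∞ > 0. Then there exists a constant C > 0, depending only on L and F∞, such that for every τ ∈ (0,1), every λ ∈ (0,1] and every continuous ℤ^d-periodic f : ℝ^d → ℝ with ‖f‖∞ ≤ F∞, the unique ℤ^d-periodic continuous solution u of the discrete discounted Lax–Oleinik equation with coupling f is Lipschitz with Lipschitz constant at most C. -/
open MeasureTheory Set Filter

noncomputable section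

/-- `ℝ^d` with the Euclidean norm. -/
abbrev Ed (d : ℕ) := EuclideanSpace ℝ (Fin d)

/-- The integer vector `k` viewed as an element of `ℝ^d`. -/
def intVec {d : ℕ} (k : Fin d → ℤ) : Ed d := WithLp.toLp 2 (fun i => (k i : ℝ))

/-- A function `h : ℝ^d → ℝ` is `ℤ^d`-periodic. -/
def ZPeriodic {d : ℕ} (h : Ed d → ℝ) : Prop :=
  ∀ (x : Ed d) (k : Fin d → ℤ), h (x + intVec k) = h x

/-- A Lagrangian `L : ℝ^d × ℝ^d → ℝ` is `ℤ^d`-periodic in its first variable. -/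
def ZPeriodic1 {d : ℕ} (L : Ed d → Ed d → ℝ) : Prop :=
  ∀ (x v : Ed d) (k : Fin d → ℤ), L (x + intVec k) v = L x v

/-- The discrete action `𝓛_{τ,f}(x,y) = τ (L(x,(y-x)/τ) + f(x))`. -/
def dAct {d : ℕ} (L : Ed d → Ed d → ℝ) (f : Ed d → ℝ) (τ : ℝ) (x y : Ed d) : ℝ :=
  τ * (L x (τ⁻¹ • (y - x)) + f x)

/-- `u` is a `ℤ^d`-periodic continuous solution of the discrete discounted
Lax–Oleinik equation `u(y) = inf_x ((1-τλ) u(x) + 𝓛_{τ,f}(x,y))`. -/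
def IsDLOSol {d : ℕ} (L : Ed d → Ed d → ℝ) (f : Ed d → ℝ) (τ lam : ℝ)
    (u : Ed d → ℝ) : Prop :=
  Continuous u ∧ ZPeriodic u ∧
    ∀ y : Ed d, IsGLB (Set.range fun x => (1 - τ * lam) * u x + dAct L f τ x y) (u y)

/-- `L` is superlinear in the velocity variable. -/
def Superlinear {d : ℕ} (L : Ed d → Ed d → ℝ) : Prop :=
  ∀ K : ℝ, 0 < K → ∃ C : ℝ, ∀ x v : Ed d, K * ‖v‖ + C ≤ L x v

/-!
Write `a = 1 - τλ`. Testing the equation with `x = y`, and at a minimum point of `u`, gives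
`C₁ - F ≤ λ u ≤ A + F`, where `C₁ ≤ L` and `A` bounds `L` on velocities of norm at most `1`.
Over a step of length at most `τ` the function `u - (A + F)/λ` is multiplied by at most `a`,
so after `n` steps by `aⁿ ≥ 1 - nτλ` (Bernoulli); since `λ · osc u ≤ D := A + 2F - C₁`, this
gives `u q - u p ≤ D (|q - p| + τ)`, a Lipschitz bound above the scale `τ`. Superlinearity of
`L` then forces every almost-minimiser `x` of the equation at `y` to have velocity
`(y - x)/τ` bounded by some `R` independent of `τ, λ, f`. Moving `y` by at most `τ` changes
this velocity by at most `1`, so the Lipschitz constant `G` of `L` in `v` on the ball of radius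
`R + 1` bounds the variation of `u` at scale `τ`, and chaining along segments makes it global.
-/

section NormedSpace

variable {E : Type*} [NormedAddCommGroup E] [NormedSpace ℝ E]

theorem norm_inv_smul_sub {τ : ℝ} (hτ : 0 < τ) (x y : E) : ‖τ⁻¹ • (y - x)‖ = dist x y / τ := by
  rw [norm_smul, norm_inv, Real.norm_of_nonneg hτ.le, dist_eq_norm', inv_mul_eq_div]

theorem exists_mem_segment_dist_le {p q : E} {n : ℕ} {δ : ℝ} (h : dist p q ≤ (n + 1) * δ) :
    ∃ z ∈ segment ℝ p q, dist p z ≤ δ ∧ dist z q ≤ n * δ := by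
  have hn : (0 : ℝ) < n + 1 := by positivity
  have hc : (n + 1 : ℝ)⁻¹ ∈ Icc (0 : ℝ) 1 := ⟨by positivity, inv_le_one_of_one_le₀ (by linarith)⟩
  refine ⟨AffineMap.lineMap p q (n + 1 : ℝ)⁻¹, lineMap_mem_segment ℝ p q hc, ?_, ?_⟩
  · rw [dist_comm, dist_lineMap_left, Real.norm_of_nonneg hc.1, inv_mul_le_iff₀ hn]
    exact h
  · rw [dist_lineMap_right, Real.norm_of_nonneg (sub_nonneg.2 hc.2)]
    calc (1 - (n + 1 : ℝ)⁻¹) * dist p q ≤ (1 - (n + 1 : ℝ)⁻¹) * ((n + 1) * δ) :=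
          mul_le_mul_of_nonneg_left h (sub_nonneg.2 hc.2)
      _ = n * δ := by field_simp; ring

theorem le_pow_mul_of_forall_dist_le {w : E → ℝ} {a δ : ℝ} (ha : 0 ≤ a)
    (h : ∀ p q, dist p q ≤ δ → w q ≤ a * w p) :
    ∀ (n : ℕ) (p q : E), dist p q ≤ n * δ → w q ≤ a ^ n * w p
  | 0, p, q, hpq => by simp [dist_le_zero.1 (by simpa using hpq)]
  | n + 1, p, q, hpq => by
    obtain ⟨z, -, hpz, hzq⟩ := exists_mem_segment_dist_le (by exact_mod_cast hpq)
    calc w q ≤ a ^ n * w z := le_pow_mul_of_forall_dist_le ha h n z q hzq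
      _ ≤ a ^ n * (a * w p) := mul_le_mul_of_nonneg_left (h p z hpz) (pow_nonneg ha n)
      _ = a ^ (n + 1) * w p := by ring

theorem sub_le_mul_dist_of_forall_dist_le {u : E → ℝ} {G δ : ℝ} (hδ : 0 < δ)
    (h : ∀ p q, dist p q ≤ δ → u q - u p ≤ G * dist p q) (p q : E) :
    u q - u p ≤ G * dist p q := by
  have key : ∀ (n : ℕ) (p q : E), dist p q ≤ n * δ → u q - u p ≤ G * dist p q := by
    intro n
    induction n with
    | zero => intro p q hpq; simp [dist_le_zero.1 (by simpa using hpq)]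
    | succ n ih =>
      intro p q hpq
      obtain ⟨z, hz, hpz, hzq⟩ := exists_mem_segment_dist_le (by exact_mod_cast hpq)
      linear_combination h p z hpz + ih z q hzq + G * dist_add_dist_of_mem_segment hz
  obtain ⟨n, hn⟩ := exists_nat_ge (dist p q / δ)
  exact key n p q ((div_le_iff₀ hδ).1 hn)

end NormedSpace

theorem exists_norm_le_sqrt_eq_add_intVec {d : ℕ} (x : Ed d) :
    ∃ (x₀ : Ed d) (k : Fin d → ℤ), ‖x₀‖ ≤ √d ∧ x = x₀ + intVec k := by
  refine ⟨WithLp.toLp 2 fun i => Int.fract (x i), fun i => ⌊x i⌋, ?_, ?_⟩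
  · rw [EuclideanSpace.norm_eq]
    gcongr
    calc ∑ i, ‖Int.fract (x i)‖ ^ 2 ≤ ∑ _i : Fin d, (1 : ℝ) := by
          gcongr with i
          rw [Real.norm_of_nonneg (Int.fract_nonneg _)]
          exact pow_le_one₀ (Int.fract_nonneg _) (Int.fract_lt_one _).le
      _ = d := by simp
  · ext i
    simp [intVec]

theorem ZPeriodic.exists_norm_le_sqrt_eq {d : ℕ} {u : Ed d → ℝ} (hu : ZPeriodic u) (x : Ed d) :
    ∃ x₀ : Ed d, ‖x₀‖ ≤ √d ∧ u x = u x₀ := by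
  obtain ⟨x₀, k, hx₀, rfl⟩ := exists_norm_le_sqrt_eq_add_intVec x
  exact ⟨x₀, hx₀, hu x₀ k⟩

theorem ZPeriodic1.exists_norm_le_sqrt_eq {d : ℕ} {L : Ed d → Ed d → ℝ} (hL : ZPeriodic1 L)
    (x : Ed d) : ∃ x₀ : Ed d, ‖x₀‖ ≤ √d ∧ L x = L x₀ := by
  obtain ⟨x₀, k, hx₀, rfl⟩ := exists_norm_le_sqrt_eq_add_intVec x
  exact ⟨x₀, hx₀, funext fun v => hL x₀ v k⟩

theorem ZPeriodic.exists_forall_le {d : ℕ} {u : Ed d → ℝ} (hu : ZPeriodic u)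
    (hc : Continuous u) : ∃ x₀, ∀ x, u x₀ ≤ u x := by
  obtain ⟨x₀, -, hx₀⟩ := (isCompact_closedBall (0 : Ed d) √d).exists_isMinOn
    (Metric.nonempty_closedBall.2 (Real.sqrt_nonneg _)) hc.continuousOn
  refine ⟨x₀, fun x => ?_⟩
  obtain ⟨x', hx', hx⟩ := hu.exists_norm_le_sqrt_eq x
  exact hx ▸ hx₀ (mem_closedBall_zero_iff.2 hx')

theorem ZPeriodic1.exists_forall_le_of_norm_le {d : ℕ} {L : Ed d → Ed d → ℝ} (hL : ZPeriodic1 L)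
    (hc : Continuous fun p : Ed d × Ed d => L p.1 p.2) (r : ℝ) :
    ∃ A, ∀ x v, ‖v‖ ≤ r → L x v ≤ A := by
  obtain ⟨A, hA⟩ := ((isCompact_closedBall (0 : Ed d) √d).prod
    (isCompact_closedBall (0 : Ed d) r)).bddAbove_image hc.continuousOn
  refine ⟨A, fun x v hv => ?_⟩
  obtain ⟨x₀, hx₀, hx⟩ := hL.exists_norm_le_sqrt_eq x
  rw [hx]
  exact hA ⟨(x₀, v), ⟨mem_closedBall_zero_iff.2 hx₀, mem_closedBall_zero_iff.2 hv⟩, rfl⟩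

theorem ZPeriodic1.exists_sub_le_mul_norm {d : ℕ} {L : Ed d → Ed d → ℝ} (hL : ZPeriodic1 L)
    (hC1 : ContDiff ℝ 1 fun p : Ed d × Ed d => L p.1 p.2) (R : ℝ) :
    ∃ G, 0 ≤ G ∧ ∀ x v w, ‖v‖ ≤ R → ‖w‖ ≤ R → L x w - L x v ≤ G * ‖w - v‖ := by
  obtain ⟨G, hG⟩ := hC1.contDiffOn.exists_lipschitzOnWith one_ne_zero
    ((convex_closedBall (0 : Ed d) √d).prod (convex_closedBall 0 R))
    ((isCompact_closedBall (0 : Ed d) √d).prod (isCompact_closedBall 0 R))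
  refine ⟨G, G.2, fun x v w hv hw => ?_⟩
  obtain ⟨x₀, hx₀, hx⟩ := hL.exists_norm_le_sqrt_eq x
  have mem : ∀ z : Ed d, ‖z‖ ≤ R →
      (x₀, z) ∈ Metric.closedBall (0 : Ed d) √d ×ˢ Metric.closedBall 0 R :=
    fun z hz => ⟨mem_closedBall_zero_iff.2 hx₀, mem_closedBall_zero_iff.2 hz⟩
  have hlip := hG.dist_le_mul _ (mem w hw) _ (mem v hv)
  rw [Prod.dist_eq, dist_self, max_eq_right dist_nonneg, Real.dist_eq, dist_eq_norm] at hlip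
  rw [hx]
  exact (le_abs_self _).trans hlip

section LaxOleinik

variable {d : ℕ} {L : Ed d → Ed d → ℝ} {f u : Ed d → ℝ} {τ lam : ℝ}

theorem dAct_self (y : Ed d) : dAct L f τ y y = τ * (L y 0 + f y) := by
  simp [dAct]

theorem dAct_sub_dAct (x y y' : Ed d) :
    dAct L f τ x y' - dAct L f τ x y = τ * (L x (τ⁻¹ • (y' - x)) - L x (τ⁻¹ • (y - x))) := by
  unfold dAct
  ring

theorem IsDLOSol.le_add_dAct (hu : IsDLOSol L f τ lam u) (x y : Ed d) :
    u y ≤ (1 - τ * lam) * u x + dAct L f τ x y :=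
  (hu.2.2 y).1 ⟨x, rfl⟩

theorem IsDLOSol.exists_add_dAct_lt (hu : IsDLOSol L f τ lam u) (y : Ed d) {ε : ℝ}
    (hε : 0 < ε) : ∃ x, (1 - τ * lam) * u x + dAct L f τ x y < u y + ε := by
  obtain ⟨_, ⟨x, rfl⟩, -, hx⟩ := (hu.2.2 y).exists_between (lt_add_of_pos_right (u y) hε)
  exact ⟨x, hx⟩

theorem IsDLOSol.mul_le (hu : IsDLOSol L f τ lam u) (hτ : 0 < τ) (y : Ed d) :
    lam * u y ≤ L y 0 + f y := by
  have h := hu.le_add_dAct y y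
  rw [dAct_self] at h
  exact le_of_mul_le_mul_left (by linarith) hτ

theorem IsDLOSol.le_mul (hu : IsDLOSol L f τ lam u) (hτ : 0 < τ) (hlam : 0 ≤ lam)
    (hτlam : τ * lam ≤ 1) {c : ℝ} (hc : ∀ x v, c ≤ L x v + f x) (z : Ed d) :
    c ≤ lam * u z := by
  obtain ⟨x₀, hx₀⟩ := hu.2.1.exists_forall_le hu.1
  have h : (1 - τ * lam) * u x₀ + τ * c ≤ u x₀ := by
    refine (hu.2.2 x₀).2 ?_
    rintro _ ⟨x, rfl⟩
    have hux := mul_le_mul_of_nonneg_left (hx₀ x) (sub_nonneg.2 hτlam)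
    have hcx := mul_le_mul_of_nonneg_left (hc x (τ⁻¹ • (x₀ - x))) hτ.le
    simp only [dAct]
    linarith
  have huz := mul_le_mul_of_nonneg_left (hx₀ z) hlam
  nlinarith

theorem IsDLOSol.sub_div_le_mul (hu : IsDLOSol L f τ lam u) (hτ : 0 < τ) (hlam : 0 < lam)
    {r B : ℝ} (hB : ∀ x v, ‖v‖ ≤ r → L x v + f x ≤ B) {p q : Ed d} (hpq : dist p q ≤ τ * r) :
    u q - B / lam ≤ (1 - τ * lam) * (u p - B / lam) := by
  have hv : ‖τ⁻¹ • (q - p)‖ ≤ r := by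
    rw [norm_inv_smul_sub hτ, div_le_iff₀ hτ, mul_comm]
    exact hpq
  have h := hu.le_add_dAct p q
  have hτB := mul_le_mul_of_nonneg_left (hB p _ hv) hτ.le
  have e : (1 - τ * lam) * (u p - B / lam) = (1 - τ * lam) * u p + τ * B - B / lam := by
    field_simp
    ring
  rw [e]
  unfold dAct at h
  linarith

theorem IsDLOSol.sub_le_mul_dist_add (hu : IsDLOSol L f τ lam u) (hτ : 0 < τ) (hlam : 0 < lam)
    (hτlam : τ * lam ≤ 1) {r B c : ℝ} (hr : 0 < r) (hB : ∀ x v, ‖v‖ ≤ r → L x v + f x ≤ B)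
    (hc : ∀ x v, c ≤ L x v + f x) (p q : Ed d) :
    u q - u p ≤ (B - c) / r * dist p q + τ * (B - c) := by
  have hτr : 0 < τ * r := mul_pos hτ hr
  set n := ⌈dist p q / (τ * r)⌉₊
  have hn : dist p q ≤ n * (τ * r) := (div_le_iff₀ hτr).1 (Nat.le_ceil _)
  have hn' : (n : ℝ) < dist p q / (τ * r) + 1 := Nat.ceil_lt_add_one (by positivity)
  have hchain := le_pow_mul_of_forall_dist_le (w := fun z => u z - B / lam)
    (sub_nonneg.2 hτlam) (fun p q => hu.sub_div_le_mul hτ hlam hB) n p q hn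
  have hbern : 1 - n * (τ * lam) ≤ (1 - τ * lam) ^ n := by
    simpa [sub_eq_add_neg] using one_add_mul_le_pow (a := -(τ * lam)) (by linarith) n
  have hQ : B / lam - u p ≤ (B - c) / lam := by
    rw [div_sub' hlam.ne', div_le_div_iff_of_pos_right hlam]
    linarith [hu.le_mul hτ hlam.le hτlam hc p]
  have hQ' : 0 ≤ B / lam - u p := by
    rw [sub_nonneg, le_div_iff₀' hlam]
    exact (hu.mul_le hτ p).trans (hB p 0 (by simpa using hr.le))
  have hBc : 0 ≤ B - c := sub_nonneg.2 ((hc 0 0).trans (hB 0 0 (by simpa using hr.le)))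
  calc u q - u p ≤ (1 - (1 - τ * lam) ^ n) * (B / lam - u p) := by linarith
    _ ≤ (n * (τ * lam)) * ((B - c) / lam) := by gcongr; linarith
    _ = n * (τ * r) * ((B - c) / r) := by field_simp
    _ ≤ (dist p q / (τ * r) + 1) * (τ * r) * ((B - c) / r) := by gcongr
    _ = (B - c) / r * dist p q + τ * (B - c) := by field_simp

theorem dist_lt_of_add_dAct_lt (hτ : 0 < τ) (hlam : 0 ≤ lam) (hτlam : τ * lam ≤ 1)
    {K M B C ε : ℝ} (hK : 0 ≤ K) (hM : 0 ≤ M)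
    (hosc : ∀ p q, u q - u p ≤ K * dist p q + τ * M)
    (hsl : ∀ x v, (K + 1) * ‖v‖ + C ≤ L x v + f x) (hB : ∀ y, lam * u y ≤ B) {x y : Ed d}
    (hx : (1 - τ * lam) * u x + dAct L f τ x y < u y + ε) :
    dist x y < τ * (M + B - C) + ε := by
  have hact : (K + 1) * dist x y + τ * C ≤ dAct L f τ x y := by
    have h := mul_le_mul_of_nonneg_left (hsl x (τ⁻¹ • (y - x))) hτ.le
    rw [norm_inv_smul_sub hτ] at h
    calc (K + 1) * dist x y + τ * C = τ * ((K + 1) * (dist x y / τ) + C) := by field_simp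
      _ ≤ dAct L f τ x y := h
  have hdiff : (1 - τ * lam) * (u y - u x) ≤ K * dist x y + τ * M := by
    have hrhs := hosc x y
    rcases le_total (u y - u x) 0 with h | h
    · nlinarith [mul_nonneg hK (dist_nonneg (x := x) (y := y)), mul_nonneg hτ.le hM]
    · nlinarith [mul_nonneg hτ.le hlam]
  have hτB := mul_le_mul_of_nonneg_left (hB y) hτ.le
  nlinarith

theorem IsDLOSol.sub_le_mul_dist_of_dist_le (hu : IsDLOSol L f τ lam u) (hτ : 0 < τ)
    (hlam : 0 ≤ lam) (hτlam : τ * lam ≤ 1) {K M B C G : ℝ} (hK : 0 ≤ K) (hM : 0 ≤ M)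
    (hosc : ∀ p q, u q - u p ≤ K * dist p q + τ * M)
    (hsl : ∀ x v, (K + 1) * ‖v‖ + C ≤ L x v + f x) (hB : ∀ y, lam * u y ≤ B)
    (hG : ∀ x v w, ‖v‖ ≤ M + B - C + 2 → ‖w‖ ≤ M + B - C + 2 → L x w - L x v ≤ G * ‖w - v‖)
    {y y' : Ed d} (hyy : dist y y' ≤ τ) : u y' - u y ≤ G * dist y y' := by
  refine le_of_forall_pos_le_add fun ε hε => ?_
  obtain ⟨x, hx⟩ := hu.exists_add_dAct_lt y (lt_min hε hτ)
  have hxy := dist_lt_of_add_dAct_lt hτ hlam hτlam hK hM hosc hsl hB hx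
  have hwv : ‖τ⁻¹ • (y' - x) - τ⁻¹ • (y - x)‖ = dist y y' / τ := by
    rw [← smul_sub, sub_sub_sub_cancel_right, norm_inv_smul_sub hτ]
  have hwv1 : dist y y' / τ ≤ 1 := (div_le_one hτ).2 hyy
  have hv : ‖τ⁻¹ • (y - x)‖ ≤ M + B - C + 1 := by
    rw [norm_inv_smul_sub hτ, div_le_iff₀ hτ]
    nlinarith [min_le_right ε τ]
  have hw : ‖τ⁻¹ • (y' - x)‖ ≤ M + B - C + 2 := by
    linarith [norm_le_norm_add_norm_sub' (τ⁻¹ • (y' - x)) (τ⁻¹ • (y - x))]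
  have hL := mul_le_mul_of_nonneg_left (hG x (τ⁻¹ • (y - x)) _ (by linarith) hw) hτ.le
  rw [hwv, mul_left_comm, mul_div_cancel₀ _ hτ.ne'] at hL
  have hy' := hu.le_add_dAct x y'
  have hact := dAct_sub_dAct (L := L) (f := f) (τ := τ) x y y'
  linarith [min_le_left ε τ]

end LaxOleinik

theorem stmt3_general (d : ℕ)
    (L : Ed d → Ed d → ℝ) (hL2 : ContDiff ℝ 2 fun p : Ed d × Ed d => L p.1 p.2)
    (hLper : ZPeriodic1 L) (hLsl : Superlinear L)
    (Finf : ℝ) (hFinf : 0 < Finf) :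
    ∃ C : ℝ, 0 < C ∧
      ∀ τ lam : ℝ, τ ∈ Set.Ioo (0:ℝ) 1 → lam ∈ Set.Ioc (0:ℝ) 1 →
        ∀ f : Ed d → ℝ, Continuous f → ZPeriodic f → (∀ x, |f x| ≤ Finf) →
          ∀ u : Ed d → ℝ, IsDLOSol L f τ lam u →
            ∀ x y : Ed d, |u x - u y| ≤ C * ‖x - y‖ := by
  obtain ⟨C₁, hC₁⟩ := hLsl 1 one_pos
  obtain ⟨A, hA⟩ := hLper.exists_forall_le_of_norm_le hL2.continuous 1
  set D := A + Finf - (C₁ - Finf)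
  have hD : 0 ≤ D := by linarith [hC₁ 0 0, hA 0 0 (by simp), norm_nonneg (0 : Ed d)]
  obtain ⟨C₂, hC₂⟩ := hLsl (D + 1) (by linarith)
  obtain ⟨G, hG, hGL⟩ := hLper.exists_sub_le_mul_norm (hL2.of_le one_le_two)
    (D + (A + Finf) - (C₂ - Finf) + 2)
  refine ⟨G + 1, by linarith, ?_⟩
  rintro τ lam ⟨hτ, hτ1⟩ ⟨hlam, hlam1⟩ f - - hf u hu
  have hτlam : τ * lam ≤ 1 := by nlinarith
  have hB : ∀ x v, ‖v‖ ≤ 1 → L x v + f x ≤ A + Finf :=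
    fun x v hv => add_le_add (hA x v hv) (le_of_abs_le (hf x))
  have hc : ∀ x v, C₁ - Finf ≤ L x v + f x :=
    fun x v => add_le_add (by linarith [hC₁ x v, norm_nonneg v]) (neg_le_of_abs_le (hf x))
  have hsl : ∀ x v, (D + 1) * ‖v‖ + (C₂ - Finf) ≤ L x v + f x := fun x v => by
    linarith [hC₂ x v, neg_le_of_abs_le (hf x)]
  have hosc : ∀ p q, u q - u p ≤ D * dist p q + τ * D := by
    simpa only [div_one] using hu.sub_le_mul_dist_add hτ hlam hτlam one_pos hB hc
  have hub : ∀ y, lam * u y ≤ A + Finf := fun y => (hu.mul_le hτ y).trans (hB y 0 (by simp))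
  have hlip : ∀ p q, u q - u p ≤ G * dist p q := sub_le_mul_dist_of_forall_dist_le hτ
    fun p q => hu.sub_le_mul_dist_of_dist_le hτ hlam.le hτlam hD hD hosc hsl hub hGL
  intro x y
  have hGd : G * dist x y ≤ (G + 1) * dist x y := by gcongr; linarith
  rw [← dist_eq_norm, abs_sub_le_iff]
  exact ⟨by linarith [dist_comm y x ▸ hlip y x], by linarith [hlip x y]⟩

/-- The solutions of the discrete discounted Lax–Oleinik equations are
equi-Lipschitz, with a Lipschitz constant depending only on `L` and `F∞`. -/
theorem stmt3 (d : ℕ) (hd : 1 ≤ d)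
    (L : Ed d → Ed d → ℝ) (hL2 : ContDiff ℝ 2 fun p : Ed d × Ed d => L p.1 p.2)
    (hLper : ZPeriodic1 L) (hLsl : Superlinear L)
    (Finf : ℝ) (hFinf : 0 < Finf) :
    ∃ C : ℝ, 0 < C ∧
      ∀ τ lam : ℝ, τ ∈ Set.Ioo (0:ℝ) 1 → lam ∈ Set.Ioc (0:ℝ) 1 →
        ∀ f : Ed d → ℝ, Continuous f → ZPeriodic f → (∀ x, |f x| ≤ Finf) →
          ∀ u : Ed d → ℝ, IsDLOSol L f τ lam u →
            ∀ x y : Ed d, |u x - u y| ≤ C * ‖x - y‖ :=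
  stmt3_general d L hL2 hLper hLsl Finf hFinf
end
end

section
/- Let d ≥ 1, τ ∈ (0,1), λ ∈ (0,1]. Let L : ℝ^d × ℝ^d → ℝ be continuous, ℤ^d-periodic in its first variable and bounded below, let f : ℝ^d → ℝ be continuous and ℤ^d-periodic, and let u be the unique ℤ^d-periodic continuous solution of the discrete discounted Lax–Oleinik equation with coupling f (L, f, u regarded as functions on 𝕋^d by periodicity). Let μ be a τ-holonomic Borel probability measure on 𝕋^d × ℝ^d such that (x,v) ↦ L(x,v) + f(x) is μ-integrable and ∫ ( L(x,v) + f(x) − λ u(x) ) dμ = 0. Then at every point (x,v) in the support of μ (in particular μ-almost everywhere) the calibration identity u(x + Π(τv)) = (1−τλ) u(x) + τ ( L(x,v) + f(x) ) holds. -/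
open MeasureTheory Set Filter

noncomputable section

/-- The flat torus `𝕋^d = ℝ^d/ℤ^d`. -/
abbrev Td (d : ℕ) := Fin d → AddCircle (1 : ℝ)

/-- The canonical projection `Π : ℝ^d → 𝕋^d`. -/
def projT {d : ℕ} (x : Ed d) : Td d := fun i => (x i : AddCircle (1:ℝ))

/-- A Borel probability measure `μ` on `𝕋^d × ℝ^d` is `τ`-holonomic if
`∫ φ(x + Π(τv)) dμ = ∫ φ(x) dμ` for every continuous `φ : 𝕋^d → ℝ`. -/
def Holonomic {d : ℕ} (τ : ℝ) (μ : Measure (Td d × Ed d)) : Prop :=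
  ∀ φ : Td d → ℝ, Continuous φ →
    ∫ p, φ (p.1 + projT (τ • p.2)) ∂μ = ∫ p, φ p.1 ∂μ

/-! The solution `u` is a subsolution: `u(x + τv) ≤ (1 - τλ) u(x) + τ (L(x,v) + f(x))` for every
`(x, v)`, because `u(x + τv)` is an infimum over all starting points `x`. So the calibration
defect, the difference of the two sides, is a nonnegative continuous function on `𝕋^d × ℝ^d`.
Holonomy gives `∫ u(x + τv) dμ = ∫ u(x) dμ`, and with `∫ (L + f - λu) dμ = 0` the defect has
integral zero. It therefore vanishes `μ`-a.e., and by continuity at every point of the support. -/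

theorem Continuous.eq_of_ae_eq_of_forall_isOpen_pos {α β : Type*} [TopologicalSpace α]
    [MeasurableSpace α] [TopologicalSpace β] [T2Space β] {μ : Measure α} {g h : α → β}
    (hg : Continuous g) (hh : Continuous h) (hgh : g =ᵐ[μ] h) {p : α}
    (hp : ∀ s : Set α, IsOpen s → p ∈ s → 0 < μ s) : g p = h p := by
  by_contra hne
  exact (hp _ (isOpen_ne_fun hg hh) hne).ne' (ae_iff.1 hgh)

theorem Continuous.eq_zero_of_integral_eq_zero_of_nonneg {α : Type*} [TopologicalSpace α]
    [MeasurableSpace α] {μ : Measure α} {g : α → ℝ} (hgc : Continuous g) (hg0 : 0 ≤ g)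
    (hgi : Integrable g μ) (hIg : ∫ x, g x ∂μ = 0) {p : α}
    (hp : ∀ s : Set α, IsOpen s → p ∈ s → 0 < μ s) : g p = 0 :=
  hgc.eq_of_ae_eq_of_forall_isOpen_pos continuous_const
    ((integral_eq_zero_iff_of_nonneg hg0 hgi).1 hIg) hp

theorem Continuous.integrable_comp_of_compactSpace {X Ω : Type*} [TopologicalSpace X]
    [CompactSpace X] [TopologicalSpace Ω] [MeasurableSpace Ω] [OpensMeasurableSpace Ω]
    {μ : Measure Ω} [IsFiniteMeasure μ] {φ : X → ℝ}
    (hφ : Continuous φ) {F : Ω → X} (hF : Continuous F) : Integrable (fun ω => φ (F ω)) μ := by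
  obtain ⟨C, hC⟩ := isCompact_univ.exists_bound_of_continuousOn hφ.continuousOn
  exact Integrable.of_bound (hφ.comp hF).aestronglyMeasurable C
    (ae_of_all _ fun ω => hC _ (mem_univ _))

section Torus

variable {d : ℕ}

theorem projT_add (x y : Ed d) : projT (x + y) = projT x + projT y := rfl

theorem isOpenQuotientMap_projT : IsOpenQuotientMap (projT (d := d)) :=
  (IsOpenQuotientMap.piMap fun _ => QuotientAddGroup.isOpenQuotientMap_mk).comp
    (PiLp.homeomorph 2 _).isOpenQuotientMap

theorem continuous_of_comp_projT {X : Type*} [TopologicalSpace X] {g : Td d → X}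
    {h : Ed d → X} (hgh : ∀ x, g (projT x) = h x) (hh : Continuous h) : Continuous g := by
  rw [isOpenQuotientMap_projT.isQuotientMap.continuous_iff]
  exact (funext hgh : g ∘ projT = h) ▸ hh

theorem continuous_uncurry_of_comp_projT {Y X : Type*} [TopologicalSpace Y]
    [TopologicalSpace X] {G : Td d → Y → X} {H : Ed d → Y → X}
    (hGH : ∀ x y, G (projT x) y = H x y) (hH : Continuous fun p : Ed d × Y => H p.1 p.2) :
    Continuous fun q : Td d × Y => G q.1 q.2 := by
  rw [(isOpenQuotientMap_projT.prodMap IsOpenQuotientMap.id).isQuotientMap.continuous_iff]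
  exact (funext fun p => hGH p.1 p.2 :
    (fun q : Td d × Y => G q.1 q.2) ∘ Prod.map projT id = fun p => H p.1 p.2) ▸ hH

theorem continuous_add_projT_smul (τ : ℝ) :
    Continuous fun q : Td d × Ed d => q.1 + projT (τ • q.2) :=
  continuous_fst.add (isOpenQuotientMap_projT.continuous.comp (continuous_snd.const_smul τ))

end Torus

theorem IsDLOSol.apply_add_smul_le {d : ℕ} {L : Ed d → Ed d → ℝ} {f : Ed d → ℝ} {τ lam : ℝ}
    {u : Ed d → ℝ} (hu : IsDLOSol L f τ lam u) (hτ : τ ≠ 0) (x v : Ed d) :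
    u (x + τ • v) ≤ (1 - τ * lam) * u x + τ * (L x v + f x) := by
  have hact : dAct L f τ x (x + τ • v) = τ * (L x v + f x) := by
    rw [dAct, add_sub_cancel_left, smul_smul, inv_mul_cancel₀ hτ, one_smul]
  exact hact ▸ (hu.2.2 (x + τ • v)).1 ⟨x, rfl⟩

section Calibration

variable {d : ℕ} {τ lam : ℝ} {Lb : Td d → Ed d → ℝ} {fb ub : Td d → ℝ}

def calibrationDefect (τ lam : ℝ) (Lb : Td d → Ed d → ℝ) (fb ub : Td d → ℝ)
    (q : Td d × Ed d) : ℝ :=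
  (1 - τ * lam) * ub q.1 + τ * (Lb q.1 q.2 + fb q.1) - ub (q.1 + projT (τ • q.2))

theorem calibrationDefect_nonneg {L : Ed d → Ed d → ℝ} {f u : Ed d → ℝ}
    (hu : IsDLOSol L f τ lam u) (hτ : τ ≠ 0) (hLb : ∀ x v, Lb (projT x) v = L x v)
    (hfb : ∀ x, fb (projT x) = f x) (hub : ∀ x, ub (projT x) = u x) :
    0 ≤ calibrationDefect τ lam Lb fb ub := by
  rintro ⟨X, v⟩
  obtain ⟨x, rfl⟩ := isOpenQuotientMap_projT.surjective X
  have hsub := hu.apply_add_smul_le hτ x v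
  simp only [calibrationDefect, Pi.zero_apply, ← projT_add, hLb, hfb, hub]
  linarith

theorem continuous_calibrationDefect (hLb : Continuous fun q : Td d × Ed d => Lb q.1 q.2)
    (hfb : Continuous fb) (hub : Continuous ub) :
    Continuous (calibrationDefect τ lam Lb fb ub) :=
  ((continuous_const.mul (hub.comp continuous_fst)).add
    (continuous_const.mul (hLb.add (hfb.comp continuous_fst)))).sub
      (hub.comp (continuous_add_projT_smul τ))

theorem integrable_calibrationDefect {μ : Measure (Td d × Ed d)} [IsFiniteMeasure μ]
    (hint : Integrable (fun q : Td d × Ed d => Lb q.1 q.2 + fb q.1) μ) (hub : Continuous ub) :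
    Integrable (calibrationDefect τ lam Lb fb ub) μ :=
  (((hub.integrable_comp_of_compactSpace continuous_fst).const_mul _).add
    (hint.const_mul τ)).sub (hub.integrable_comp_of_compactSpace (continuous_add_projT_smul τ))

theorem integral_calibrationDefect_eq_zero {μ : Measure (Td d × Ed d)} [IsFiniteMeasure μ]
    (hhol : Holonomic τ μ) (hint : Integrable (fun q : Td d × Ed d => Lb q.1 q.2 + fb q.1) μ)
    (hub : Continuous ub) (hzero : ∫ q, (Lb q.1 q.2 + fb q.1 - lam * ub q.1) ∂μ = 0) :
    ∫ q, calibrationDefect τ lam Lb fb ub q ∂μ = 0 := by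
  have iu := hub.integrable_comp_of_compactSpace (μ := μ) continuous_fst
  have iu_shift := hub.integrable_comp_of_compactSpace (μ := μ) (continuous_add_projT_smul τ)
  have hLf : ∫ q, (Lb q.1 q.2 + fb q.1) ∂μ = lam * ∫ q, ub q.1 ∂μ := by
    rwa [integral_sub hint (iu.const_mul lam), integral_const_mul, sub_eq_zero] at hzero
  have iA : Integrable (fun q : Td d × Ed d =>
      (1 - τ * lam) * ub q.1 + τ * (Lb q.1 q.2 + fb q.1)) μ :=
    (iu.const_mul _).add (hint.const_mul τ)
  unfold calibrationDefect
  rw [integral_sub iA iu_shift, integral_add (iu.const_mul _) (hint.const_mul τ),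
    integral_const_mul, integral_const_mul, hLf, hhol ub hub]
  ring

end Calibration

theorem stmt6_general (d : ℕ) (τ lam : ℝ)
    (hτ : τ ∈ Set.Ioo (0:ℝ) 1)
    (L : Ed d → Ed d → ℝ) (hLc : Continuous fun p : Ed d × Ed d => L p.1 p.2)
    (f : Ed d → ℝ) (hfc : Continuous f)
    (u : Ed d → ℝ) (hu : IsDLOSol L f τ lam u)
    (Lb : Td d → Ed d → ℝ) (fb ub : Td d → ℝ)
    (hLb : ∀ (x v : Ed d), Lb (projT x) v = L x v)
    (hfb : ∀ x : Ed d, fb (projT x) = f x)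
    (hub : ∀ x : Ed d, ub (projT x) = u x)
    (μ : Measure (Td d × Ed d)) (hμ : IsProbabilityMeasure μ)
    (hhol : Holonomic τ μ)
    (hint : Integrable (fun p : Td d × Ed d => Lb p.1 p.2 + fb p.1) μ)
    (hzero : ∫ p, (Lb p.1 p.2 + fb p.1 - lam * ub p.1) ∂μ = 0) :
    ∀ p : Td d × Ed d,
      (∀ s : Set (Td d × Ed d), IsOpen s → p ∈ s → 0 < μ s) →
      ub (p.1 + projT (τ • p.2)) = (1 - τ * lam) * ub p.1 + τ * (Lb p.1 p.2 + fb p.1) := by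
  intro p hp
  have hubc : Continuous ub := continuous_of_comp_projT hub hu.1
  have hdefect : calibrationDefect τ lam Lb fb ub p = 0 := (continuous_calibrationDefect (continuous_uncurry_of_comp_projT hLb hLc)
    (continuous_of_comp_projT hfb hfc) hubc).eq_zero_of_integral_eq_zero_of_nonneg
    (calibrationDefect_nonneg hu hτ.1.ne' hLb hfb hub) (integrable_calibrationDefect hint hubc)
    (integral_calibrationDefect_eq_zero hhol hint hubc hzero) hp
  exact (sub_eq_zero.1 hdefect).symm

/-- If a `τ`-holonomic probability measure `μ` satisfies
`∫ (L + f - λu) dμ = 0`, then the calibration identity holds at every point of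
the support of `μ`. -/
theorem stmt6 (d : ℕ) (hd : 1 ≤ d) (τ lam : ℝ)
    (hτ : τ ∈ Set.Ioo (0:ℝ) 1) (hlam : lam ∈ Set.Ioc (0:ℝ) 1)
    (L : Ed d → Ed d → ℝ) (hLc : Continuous fun p : Ed d × Ed d => L p.1 p.2)
    (hLper : ZPeriodic1 L) (hLbd : ∃ c : ℝ, ∀ x v : Ed d, c ≤ L x v)
    (f : Ed d → ℝ) (hfc : Continuous f) (hfper : ZPeriodic f)
    (u : Ed d → ℝ) (hu : IsDLOSol L f τ lam u)
    (Lb : Td d → Ed d → ℝ) (fb ub : Td d → ℝ)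
    (hLb : ∀ (x v : Ed d), Lb (projT x) v = L x v)
    (hfb : ∀ x : Ed d, fb (projT x) = f x)
    (hub : ∀ x : Ed d, ub (projT x) = u x)
    (μ : Measure (Td d × Ed d)) (hμ : IsProbabilityMeasure μ)
    (hhol : Holonomic τ μ)
    (hint : Integrable (fun p : Td d × Ed d => Lb p.1 p.2 + fb p.1) μ)
    (hzero : ∫ p, (Lb p.1 p.2 + fb p.1 - lam * ub p.1) ∂μ = 0) :
    ∀ p : Td d × Ed d,
      (∀ s : Set (Td d × Ed d), IsOpen s → p ∈ s → 0 < μ s) →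
      ub (p.1 + projT (τ • p.2)) = (1 - τ * lam) * ub p.1 + τ * (Lb p.1 p.2 + fb p.1) :=
  stmt6_general d τ lam hτ L hLc f hfc u hu Lb fb ub hLb hfb hub μ hμ hhol hint hzero
end
end

section
/- Let d ≥ 1. Let H : ℝ^d × ℝ^d → ℝ be ℤ^d-periodic in its first variable such that for each x the map p ↦ H(x,p) is convex and differentiable, and define L(x,v) := sup_{p ∈ ℝ^d} ( ⟨p,v⟩ − H(x,p) ), assumed finite for all (x,v). Let u : ℝ^d → ℝ be ℤ^d-periodic, and let μ be a closed Borel probability measure on 𝕋^d × ℝ^d such that for μ-almost every (x,v): u is differentiable at x (the gradient Du(x) being well defined by periodicity) and the Fenchel equality L(x,v) + H(x, Du(x)) = ⟨Du(x), v⟩ holds. Then for every ℤ^d-periodic C¹ function φ : ℝ^d → ℝ one has ∫_{𝕋^d × ℝ^d} ⟨ Dφ(x), ∂H/∂p (x, Du(x)) ⟩ dμ(x,v) = 0; that is, the projection of μ onto 𝕋^d solves the continuity equation div( m ∂H/∂p(x, Du) ) = 0 in the sense of distributions. -/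
open MeasureTheory Set Filter

noncomputable section

/-- A Borel probability measure `μ` on `𝕋^d × ℝ^d` is a closed measure:
`∫ |v| dμ < ∞` and `∫ ⟨v, Dφ(x)⟩ dμ = 0` for every `ℤ^d`-periodic `C¹`
function `φ` on `ℝ^d` (whose differential descends to `𝕋^d` as `G`). -/
def ClosedMeasure {d : ℕ} (μ : Measure (Td d × Ed d)) : Prop :=
  Integrable (fun p : Td d × Ed d => ‖p.2‖) μ ∧
    ∀ φ : Ed d → ℝ, ContDiff ℝ 1 φ → ZPeriodic φ →
      ∀ G : Td d → (Ed d →L[ℝ] ℝ), (∀ x : Ed d, G (projT x) = fderiv ℝ φ x) →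
        ∫ p, G p.1 p.2 ∂μ = 0

/-- The real inner product on `ℝ^d`. -/
def rinner {d : ℕ} (x y : Ed d) : ℝ := inner ℝ x y

/-
At μ-almost every point the Fenchel equality says that `p ↦ ⟨p, v⟩ - H(x, p)` attains its
supremum at `p = Du(x)`, so its derivative vanishes there: `∂H/∂p(x, Du(x)) = v`. The integrand
is therefore a.e. equal to `⟨Dφ(x), v⟩`, whose integral vanishes because `μ` is closed.
-/

open scoped InnerProductSpace

section Fenchel

variable {E : Type*} [NormedAddCommGroup E] [InnerProductSpace ℝ E] [CompleteSpace E]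

theorem gradient_eq_of_isMaxOn_inner_sub {f : E → ℝ} {q v : E} (hf : DifferentiableAt ℝ f q)
    (hmax : IsMaxOn (fun p => ⟪p, v⟫_ℝ - f p) univ q) : gradient f q = v := by
  have hmin : IsLocalMin (fun p => f p - innerSL ℝ v p) q :=
    IsMinOn.isLocalMin (fun p _ => by
      have := hmax (mem_univ p)
      change (_ : ℝ) ≤ _ at this ⊢
      simp only [innerSL_apply_apply, real_inner_comm v] at this ⊢
      linarith) univ_mem
  have hderiv : fderiv ℝ f q = innerSL ℝ v := by
    have := hmin.fderiv_eq_zero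
    rwa [fderiv_fun_sub hf (innerSL ℝ v).differentiableAt, (innerSL ℝ v).fderiv,
      sub_eq_zero] at this
  refine ext_inner_right ℝ fun w => ?_
  rw [inner_gradient_left, hderiv, innerSL_apply_apply]

theorem gradient_eq_of_fenchel_eq {f : E → ℝ} {q v : E} {ℓ : ℝ} (hf : DifferentiableAt ℝ f q)
    (hℓ : IsLUB (range fun p => ⟪p, v⟫_ℝ - f p) ℓ) (heq : ℓ + f q = ⟪q, v⟫_ℝ) :
    gradient f q = v :=
  gradient_eq_of_isMaxOn_inner_sub hf fun p _ => by
    have := hℓ.1 ⟨p, rfl⟩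
    change (_ : ℝ) ≤ _
    linarith

end Fenchel

section Torus

variable {d : ℕ}

theorem projT_surjective : Function.Surjective (projT (d := d)) := by
  intro t
  choose x hx using fun i => Quotient.exists_rep (t i)
  exact ⟨WithLp.toLp 2 x, funext hx⟩

theorem exists_eq_add_intVec_of_projT_eq {x y : Ed d} (h : projT x = projT y) :
    ∃ k : Fin d → ℤ, y = x + intVec k := by
  have hcoord : ∀ i, ∃ k : ℤ, y i - x i = k := by
    intro i
    obtain ⟨m, hm⟩ := AddSubgroup.mem_zmultiples_iff.mp
      ((QuotientAddGroup.eq_iff_sub_mem).mp (congrFun h i))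
    refine ⟨-m, ?_⟩
    simp only [zsmul_eq_mul, mul_one] at hm
    push_cast
    linarith
  choose k hk using hcoord
  refine ⟨k, ?_⟩
  ext i
  simp only [intVec, PiLp.add_apply]
  linarith [hk i]

theorem ZPeriodic.fderiv_eq_of_projT_eq {φ : Ed d → ℝ} (hφ : ZPeriodic φ) {x y : Ed d}
    (h : projT x = projT y) : fderiv ℝ φ x = fderiv ℝ φ y := by
  obtain ⟨k, rfl⟩ := exists_eq_add_intVec_of_projT_eq h
  rw [← fderiv_comp_add_right, funext fun z => hφ z k]

theorem ZPeriodic.exists_fderiv_descends {φ : Ed d → ℝ} (hφ : ZPeriodic φ) :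
    ∃ G : Td d → (Ed d →L[ℝ] ℝ), ∀ x, G (projT x) = fderiv ℝ φ x := by
  refine ⟨fun t => fderiv ℝ φ (Function.surjInv projT_surjective t), fun x => ?_⟩
  exact hφ.fderiv_eq_of_projT_eq (Function.surjInv_eq projT_surjective (projT x))

end Torus

theorem stmt18_general (d : ℕ)
    (H : Ed d → Ed d → ℝ)
    (hHdiff : ∀ x : Ed d, Differentiable ℝ (H x))
    (L : Ed d → Ed d → ℝ)
    (hL : ∀ x v : Ed d, IsLUB (Set.range fun p : Ed d => rinner p v - H x p) (L x v))
    (u : Ed d → ℝ)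
    (μ : Measure (Td d × Ed d))
    (hclosed : ClosedMeasure μ)
    (hae : ∀ᵐ p ∂μ, ∀ x : Ed d, projT x = p.1 →
      DifferentiableAt ℝ u x ∧
        L x p.2 + H x (gradient u x) = rinner (gradient u x) p.2) :
    ∀ φ : Ed d → ℝ, ContDiff ℝ 1 φ → ZPeriodic φ →
      ∀ W : Td d × Ed d → ℝ,
        (∀ (x v : Ed d), DifferentiableAt ℝ u x →
          W (projT x, v) = rinner (gradient φ x) (gradient (H x) (gradient u x))) →
        ∫ p, W p ∂μ = 0 := by
  intro φ hφ hφper W hW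
  obtain ⟨G, hG⟩ := hφper.exists_fderiv_descends
  have hWG : W =ᵐ[μ] fun p => G p.1 p.2 := by
    filter_upwards [hae] with ⟨t, v⟩ hp
    obtain ⟨x, rfl⟩ := projT_surjective t
    obtain ⟨hu, hfenchel⟩ := hp x rfl
    have hHgrad : gradient (H x) (gradient u x) = v :=
      gradient_eq_of_fenchel_eq (hHdiff x _) (hL x v) hfenchel
    rw [hW x v hu, hHgrad, hG, rinner, inner_gradient_left]
  rw [integral_congr_ae hWG]
  exact hclosed.2 φ hφ hφper G hG

/-- If `μ` is a closed measure along which the Fenchel equality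
`L(x,v) + H(x,Du(x)) = ⟨Du(x),v⟩` holds a.e., then the projection of `μ`
solves the continuity equation `div(m ∂H/∂p(x,Du)) = 0` in the sense of
distributions: `∫ ⟨Dφ(x), ∂H/∂p(x,Du(x))⟩ dμ = 0` for all periodic `C¹` φ. -/
theorem stmt18 (d : ℕ) (hd : 1 ≤ d)
    (H : Ed d → Ed d → ℝ) (hHper : ZPeriodic1 H)
    (hHconv : ∀ x : Ed d, ConvexOn ℝ Set.univ (H x))
    (hHdiff : ∀ x : Ed d, Differentiable ℝ (H x))
    (L : Ed d → Ed d → ℝ)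
    (hL : ∀ x v : Ed d, IsLUB (Set.range fun p : Ed d => rinner p v - H x p) (L x v))
    (u : Ed d → ℝ) (huper : ZPeriodic u)
    (μ : Measure (Td d × Ed d)) (hμ : IsProbabilityMeasure μ)
    (hclosed : ClosedMeasure μ)
    (hae : ∀ᵐ p ∂μ, ∀ x : Ed d, projT x = p.1 →
      DifferentiableAt ℝ u x ∧
        L x p.2 + H x (gradient u x) = rinner (gradient u x) p.2) :
    ∀ φ : Ed d → ℝ, ContDiff ℝ 1 φ → ZPeriodic φ →
      ∀ W : Td d × Ed d → ℝ,
        (∀ (x v : Ed d), DifferentiableAt ℝ u x →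
          W (projT x, v) = rinner (gradient φ x) (gradient (H x) (gradient u x))) →
        ∫ p, W p ∂μ = 0 :=
  stmt18_general d H hHdiff L hL u μ hclosed hae
end
end
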